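/- Define P₁(μ, B) = (1/3)·(1 + e^{−7μ}·((3/4)e^{−B}e^{−4μ} + (1 − (1/2)e^{−B})e^{−2μ} + (1 − (1/4)e^{−B}))). Then for all real μ > 0 and B > 0 one has P₁(μ, B) > 1/3 and (1 − P₁(μ, B))/2 < 1/3. (P₁(μ, B) is the probability, under the standard LGT model with rate λ, that a random transfer sequence on a pectinate four-taxon species tree of type (ab;c;*) induces the matching triplet topology ab|c, where μ = (1/3)λt₂ and B = 3λ(t₃ − t₂); each of the two mismatch topologies has probability (1 − P₁)/2.) -/
import Mathlib


/-- The probability that a random transfer sequence on a pectinate four-taxon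
species tree of type `(ab;c;*)` induces the matching triplet topology `ab|c`. -/
noncomputable def P₁ (μ B : ℝ) : ℝ :=
  (1/3) * (1 + Real.exp (-7 * μ) * ((3/4) * Real.exp (-B) * Real.exp (-4 * μ)
      + (1 - (1/2) * Real.exp (-B)) * Real.exp (-2 * μ)
      + (1 - (1/4) * Real.exp (-B))))

theorem match_prob_gt_third_abc_star (μ B : ℝ) (hμ : 0 < μ) (hB : 0 < B) :
    P₁ μ B > 1/3 ∧ (1 - P₁ μ B) / 2 < 1/3 := by
  have hB1 : Real.exp (-B) < 1 := Real.exp_lt_one_iff.mpr (by linarith)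
  have hB0 : 0 < Real.exp (-B) := Real.exp_pos _
  have h7 : 0 < Real.exp (-7 * μ) := Real.exp_pos _
  have h4 : 0 < Real.exp (-4 * μ) := Real.exp_pos _
  have h2 : 0 < Real.exp (-2 * μ) := Real.exp_pos _
  have key : P₁ μ B > 1/3 := by
    unfold P₁
    nlinarith [mul_pos h7 (mul_pos hB0 h4), mul_pos h7 h2, mul_pos h7 hB0,
      mul_pos (mul_pos h7 hB0) h2]
  exact ⟨key, by linarith⟩
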